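/- Let w > -1 be a real constant and f: ℝ → ℝ a differentiable function, and consider the three-dimensional system x' = -(3/2)[2x + (w-1)x³ + x(w+1)(y²-1) - √(2/3)λy²], y' = -(3/2)y[(w-1)x² + (w+1)(y²-1) + √(2/3)λx], λ' = -√6 f(λ)x. Then: (i) the point D = (x,y,λ) = (0,1,0) is a zero of the vector field (regardless of f); (ii) the Jacobian matrix at D has eigenvalues -3(w+1) together with the two roots of μ² + 3μ + 3f(0) = 0, i.e. -(3/2)(1 ± √(1 - 4f(0)/3)); (iii) all eigenvalues have negative real part if and only if f(0) > 0, in which case D is a hyperbolic sink, while if f(0) < 0 one eigenvalue is positive and D is a saddle. -/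

import Mathlib

open Polynomial

/-- `x`-component of the quintessence vector field with dynamical `λ`. -/
noncomputable def P15x (w x y l : ℝ) : ℝ :=
  -(3 / 2) * (2 * x + (w - 1) * x ^ 3 + x * (w + 1) * (y ^ 2 - 1)
    - Real.sqrt (2 / 3) * l * y ^ 2)

/-- `y`-component of the quintessence vector field with dynamical `λ`. -/
noncomputable def P15y (w x y l : ℝ) : ℝ :=
  -(3 / 2) * y * ((w - 1) * x ^ 2 + (w + 1) * (y ^ 2 - 1) + Real.sqrt (2 / 3) * l * x)

/-- `λ`-component of the quintessence vector field with dynamical `λ`: `λ' = -√6 f(λ) x`. -/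
noncomputable def P15l (f : ℝ → ℝ) (x y l : ℝ) : ℝ := -Real.sqrt 6 * f l * x

/-- Jacobian matrix of the three-dimensional quintessence system at `(x₀, y₀, l₀)`. -/
noncomputable def jac15 (w : ℝ) (f : ℝ → ℝ) (x₀ y₀ l₀ : ℝ) : Matrix (Fin 3) (Fin 3) ℝ :=
  !![deriv (fun x => P15x w x y₀ l₀) x₀, deriv (fun y => P15x w x₀ y l₀) y₀,
       deriv (fun l => P15x w x₀ y₀ l) l₀;
     deriv (fun x => P15y w x y₀ l₀) x₀, deriv (fun y => P15y w x₀ y l₀) y₀,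
       deriv (fun l => P15y w x₀ y₀ l) l₀;
     deriv (fun x => P15l f x y₀ l₀) x₀, deriv (fun y => P15l f x₀ y l₀) y₀,
       deriv (fun l => P15l f x₀ y₀ l) l₀]

/-!
At `D = (0, 1, 0)` the `y`-direction decouples from `(x, λ)` to linear order, so the Jacobian is
block diagonal up to a permutation: the `y`-block gives the eigenvalue `-3(w + 1)`, and the
`(x, λ)`-block has trace `-3` and determinant `(3/2)√(2/3) · √6 f(0) = 3 f(0)`. The stability
statements are then the Routh–Hurwitz criterion for the monic quadratic `μ² + 3μ + 3f(0)`: with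
positive linear coefficient, both roots lie in the open left half-plane iff the constant term is
positive, and otherwise there is a nonnegative (positive if `f(0) < 0`) real root.
-/

theorem Matrix.charpoly_fin_three_of_block {R : Type*} [CommRing R] (p q r a b : R) :
    (!![p, 0, a; 0, q, 0; b, 0, r]).charpoly
      = (X - C q) * (X ^ 2 - C (p + r) * X + C (p * r - a * b)) := by
  rw [charpoly, det_fin_three]
  simp only [Fin.isValue, charmatrix_apply_eq, of_apply, cons_val', cons_val_zero,
    cons_val_fin_one, cons_val_one, cons_val, ne_eq, Fin.reduceEq, not_false_eq_true,
    charmatrix_apply_ne, map_zero, neg_zero, mul_zero, sub_zero, zero_ne_one, one_ne_zero,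
    zero_mul, mul_neg, add_zero, neg_mul, neg_neg, map_add, map_sub, map_mul]
  ring

theorem jac15_zero_one_zero (w : ℝ) (f : ℝ → ℝ) :
    jac15 w f 0 1 0 = !![-3, 0, 3 / 2 * √(2 / 3); 0, -(3 * (w + 1)), 0; -(√6 * f 0), 0, 0] := by
  ext i j
  fin_cases i <;> fin_cases j <;>
    simp (disch := fun_prop) [jac15, P15x, P15y, P15l, deriv_fun_add, deriv_fun_mul,
      deriv_fun_sub, deriv_fun_pow] <;> ring

theorem charpoly_jac15_zero_one_zero (w : ℝ) (f : ℝ → ℝ) :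
    (jac15 w f 0 1 0).charpoly = (X + C (3 * (w + 1))) * (X ^ 2 + C 3 * X + C (3 * f 0)) := by
  have hdet : -3 * 0 - 3 / 2 * √(2 / 3) * -(√6 * f 0) = 3 * f 0 := by
    rw [mul_neg, sub_neg_eq_add, mul_assoc, ← mul_assoc √(2 / 3), ← Real.sqrt_mul (by norm_num)]
    norm_num
    ring
  rw [jac15_zero_one_zero, Matrix.charpoly_fin_three_of_block, hdet]
  simp only [map_neg, add_zero, sub_neg_eq_add, neg_mul]

theorem exists_pos_root_of_neg (b : ℝ) {c : ℝ} (hc : c < 0) :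
    ∃ μ : ℝ, μ ^ 2 + b * μ + c = 0 ∧ 0 < μ := by
  have hdisc : 0 ≤ b ^ 2 - 4 * c := by nlinarith
  refine ⟨(-b + √(b ^ 2 - 4 * c)) / 2, by nlinarith [Real.sq_sqrt hdisc], ?_⟩
  have : |b| < √(b ^ 2 - 4 * c) := by
    rw [← Real.sqrt_sq_eq_abs]
    exact Real.sqrt_lt_sqrt (sq_nonneg b) (by linarith)
  linarith [le_abs_self b]

theorem exists_nonneg_root_of_nonpos (b : ℝ) {c : ℝ} (hc : c ≤ 0) :
    ∃ μ : ℝ, μ ^ 2 + b * μ + c = 0 ∧ 0 ≤ μ := by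
  rcases hc.lt_or_eq with hc | rfl
  · obtain ⟨μ, hμ, hpos⟩ := exists_pos_root_of_neg b hc
    exact ⟨μ, hμ, hpos.le⟩
  · exact ⟨0, by ring, le_rfl⟩

theorem Complex.re_neg_of_sq_add_mul_add_eq_zero {b c : ℝ} (hb : 0 < b) (hc : 0 < c) {μ : ℂ}
    (hμ : μ ^ 2 + b * μ + c = 0) : μ.re < 0 := by
  have hre := congrArg re hμ
  have him := congrArg im hμ
  simp only [pow_two, add_re, mul_re, ofReal_re, ofReal_im, add_im, mul_im, zero_re,
    zero_im] at hre him
  rcases eq_or_ne μ.im 0 with hreal | hnonreal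
  · by_contra! hnonneg
    rw [hreal] at hre
    nlinarith
  · have hvertex : μ.im * (2 * μ.re + b) = 0 := by linarith
    linarith [(mul_eq_zero.mp hvertex).resolve_left hnonreal]

theorem Complex.forall_roots_re_neg_iff {b : ℝ} (hb : 0 < b) (c : ℝ) :
    (∀ μ : ℂ, μ ^ 2 + b * μ + c = 0 → μ.re < 0) ↔ 0 < c := by
  refine ⟨fun h => ?_, fun hc μ => re_neg_of_sq_add_mul_add_eq_zero hb hc⟩
  by_contra! hc
  obtain ⟨μ, hμ, hμ_nonneg⟩ := exists_nonneg_root_of_nonpos b hc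
  have := h μ (by exact_mod_cast hμ)
  rw [ofReal_re] at this
  linarith

theorem quintessence_de_sitter_point_general (w : ℝ) (hw : -1 < w) (f : ℝ → ℝ) :
    (P15x w 0 1 0 = 0 ∧ P15y w 0 1 0 = 0 ∧ P15l f 0 1 0 = 0) ∧
    (jac15 w f 0 1 0).charpoly
      = (X + C (3 * (w + 1))) * (X ^ 2 + C 3 * X + C (3 * f 0)) ∧
    ((∀ μ : ℂ, (μ + 3 * ((w : ℂ) + 1)) * (μ ^ 2 + 3 * μ + 3 * (f 0 : ℂ)) = 0 → μ.re < 0)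
      ↔ 0 < f 0) ∧
    (f 0 < 0 → ∃ μ : ℝ, μ ^ 2 + 3 * μ + 3 * f 0 = 0 ∧ 0 < μ) := by
  refine ⟨⟨by norm_num [P15x], by norm_num [P15y], by norm_num [P15l]⟩,
    charpoly_jac15_zero_one_zero w f, ?_, fun hf0 => ?_⟩
  · have hlinear : ∀ μ : ℂ, μ + 3 * ((w : ℂ) + 1) = 0 → μ.re < 0 := fun μ hμ => by
      rw [show μ = ((-(3 * (w + 1)) : ℝ) : ℂ) by push_cast; linear_combination hμ,
        Complex.ofReal_re]
      linarith
    have hquadratic := Complex.forall_roots_re_neg_iff (b := 3) (by norm_num) (3 * f 0)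
    push_cast at hquadratic
    rw [← mul_pos_iff_of_pos_left (by norm_num : (0 : ℝ) < 3), ← hquadratic]
    refine ⟨fun h μ hμ => h μ (by rw [hμ, mul_zero]), fun h μ hμ => ?_⟩
    rcases mul_eq_zero.mp hμ with hμ | hμ
    exacts [hlinear μ hμ, h μ hμ]
  · exact exists_pos_root_of_neg 3 (by linarith)

/-- The de Sitter point `D = (0,1,0)` of the three-dimensional quintessence system with an
arbitrary potential (encoded by `f`): it is a fixed point; the Jacobian there has eigenvalue
`-3(w+1)` together with the roots of `μ² + 3μ + 3f(0) = 0`; all eigenvalues have negative real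
part iff `f(0) > 0` (hyperbolic sink), while if `f(0) < 0` one eigenvalue is positive
(saddle). -/
theorem quintessence_de_sitter_point (w : ℝ) (hw : -1 < w) (f : ℝ → ℝ)
    (hf : Differentiable ℝ f) :
    (P15x w 0 1 0 = 0 ∧ P15y w 0 1 0 = 0 ∧ P15l f 0 1 0 = 0) ∧
    (jac15 w f 0 1 0).charpoly
      = (X + C (3 * (w + 1))) * (X ^ 2 + C 3 * X + C (3 * f 0)) ∧
    ((∀ μ : ℂ, (μ + 3 * ((w : ℂ) + 1)) * (μ ^ 2 + 3 * μ + 3 * (f 0 : ℂ)) = 0 → μ.re < 0)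
      ↔ 0 < f 0) ∧
    (f 0 < 0 → ∃ μ : ℝ, μ ^ 2 + 3 * μ + 3 * f 0 = 0 ∧ 0 < μ) :=
  quintessence_de_sitter_point_general w hw f
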